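/- arXiv:math/9804074 — 11 statements merged into one kernel-verified Lean document; each statement's English description precedes it below -/
import Mathlib

section
/- Let A be a unital C*-algebra, E a conditional expectation on A, and K > 0 a real number such that ‖x* x‖ ≤ K·‖E(x* x)‖ for every x ∈ A. Then a* a ≤ K·E(a* a) holds in the order of A for every a ∈ A; in particular the map K·E − id_A is positive. -/
variable {A : Type*} [CStarAlgebra A] [PartialOrder A] [StarOrderedRing A]

/-- A conditional expectation on a unital C*-algebra `A`: a linear, idempotent, unital,
positive, contractive (norm-one, since `E 1 = 1`) map whose range is a C*-subalgebra
`B = E(A)` (closed under multiplication and star) and which is a `B`-bimodule map. -/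
structure IsCondExp (E : A → A) : Prop where
  map_add : ∀ a b : A, E (a + b) = E a + E b
  map_smul : ∀ (c : ℂ) (a : A), E (c • a) = c • E a
  idem : ∀ a : A, E (E a) = E a
  map_one : E 1 = 1
  pos : ∀ a : A, 0 ≤ a → 0 ≤ E a
  contractive : ∀ a : A, ‖E a‖ ≤ ‖a‖
  range_mul : ∀ a b : A, E (E a * E b) = E a * E b
  range_star : ∀ a : A, E (star (E a)) = star (E a)
  bimod : ∀ a b c : A, E (E b * a * E c) = E b * E a * E c

/-! For `t > 0` put `b = K • E(x⋆x) + t`. It lies in the range of `E`, a closed ⋆-subalgebra,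
hence so does `r = b ^ (-1/2)`, and `E` commutes with conjugation by `r`. The hypothesis applied
to `x r` gives `‖x r‖² ≤ K ‖r E(x⋆x) r‖ ≤ ‖r b r‖ = 1`, which says `x⋆x ≤ b`; now let `t → 0`. -/

open CFC

section

variable {𝒜 : Type*} [CStarAlgebra 𝒜] [PartialOrder 𝒜]

lemma star_mul_self_le_iff_norm_mul_rpow [StarOrderedRing 𝒜] (x : 𝒜) {b : 𝒜}
    (hb : IsStrictlyPositive b) : star x * x ≤ b ↔ ‖x * b ^ (-(1 / 2) : ℝ)‖ ≤ 1 := by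
  rw [le_iff_norm_sqrt_mul_rpow _ _ (star_mul_self_nonneg x) hb]
  set r := b ^ (-(1 / 2) : ℝ)
  have hr : star r = r := (IsSelfAdjoint.of_nonneg rpow_nonneg).star_eq
  have hconj : ∀ y : 𝒜, star (y * r) * (y * r) = r * (star y * y) * r := fun y => by
    simp only [star_mul, hr, mul_assoc]
  have hsqrt : star (sqrt (star x * x)) * sqrt (star x * x) = star x * x := by
    rw [(IsSelfAdjoint.of_nonneg (sqrt_nonneg _)).star_eq, sqrt_mul_sqrt_self _]
  have hnorm : ‖sqrt (star x * x) * r‖ = ‖x * r‖ := by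
    rw [← mul_self_inj (norm_nonneg _) (norm_nonneg _), ← CStarRing.norm_star_mul_self,
      ← CStarRing.norm_star_mul_self, hconj, hconj, hsqrt]
  rw [hnorm]

lemma le_of_forall_pos_le_add_algebraMap [StarOrderedRing 𝒜] {a b : 𝒜}
    (h : ∀ t : ℝ, 0 < t → a ≤ b + algebraMap ℝ 𝒜 t) : a ≤ b := by
  have hcont : Continuous fun t : ℝ => b + algebraMap ℝ 𝒜 t :=
    continuous_const.add (continuous_algebraMap ℝ 𝒜)
  exact ge_of_tendsto
    ((hcont.tendsto' 0 b (by simp)).mono_left (nhdsWithin_le_nhds (s := Set.Ioi 0)))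
    (eventually_nhdsWithin_of_forall h)

namespace IsCondExp

variable {E : 𝒜 → 𝒜}

def toLinearMap (hE : IsCondExp E) : 𝒜 →ₗ[ℂ] 𝒜 where
  toFun := E
  map_add' := hE.map_add
  map_smul' := hE.map_smul

lemma continuous (hE : IsCondExp E) : Continuous E :=
  AddMonoidHomClass.continuous_of_bound hE.toLinearMap 1 fun x => by
    rw [one_mul]; exact hE.contractive x

lemma map_real_smul (hE : IsCondExp E) (s : ℝ) (a : 𝒜) : E (s • a) = s • E a :=
  hE.toLinearMap.map_smul_of_tower s a

/-- The range `B = E(A)`, described as the fixed points of the idempotent `E`. -/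
def fixedStarSubalgebra (hE : IsCondExp E) : StarSubalgebra ℂ 𝒜 where
  carrier := {x | E x = x}
  mul_mem' {a b} (ha : E a = a) (hb : E b = b) := by simpa [ha, hb] using hE.range_mul a b
  add_mem' {a b} (ha : E a = a) (hb : E b = b) := by simp [hE.map_add, ha, hb]
  algebraMap_mem' c := by
    simp [Algebra.algebraMap_eq_smul_one, hE.map_smul, hE.map_one]
  star_mem' {a} (ha : E a = a) := by simpa [ha] using hE.range_star a

lemma isClosed_fixedStarSubalgebra (hE : IsCondExp E) :
    IsClosed (hE.fixedStarSubalgebra : Set 𝒜) :=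
  isClosed_eq hE.continuous continuous_id

lemma map_cfc (hE : IsCondExp E) {a : 𝒜} (ha : E a = a) (f : ℝ → ℝ) : E (cfc f a) = cfc f a :=
  cfc_mem (s := hE.fixedStarSubalgebra) (hs := hE.isClosed_fixedStarSubalgebra) (𝕜' := ℂ) f ha

lemma map_rpow [StarOrderedRing 𝒜] (hE : IsCondExp E) {a : 𝒜} (ha : E a = a) (ha₀ : 0 ≤ a)
    (y : ℝ) : E (a ^ y) = a ^ y := by
  rw [rpow_eq_cfc_real ha₀]
  exact hE.map_cfc ha _

lemma map_star_mul_mul (hE : IsCondExp E) {r : 𝒜} (hr : E r = r) (a : 𝒜) :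
    E (star r * a * r) = star r * E a * r := by
  have hr' : E (star r) = star r := by simpa [hr] using hE.range_star r
  simpa [hr, hr'] using hE.bimod a (star r) r

lemma norm_mul_sq_le (hE : IsCondExp E) {K : ℝ}
    (hnorm : ∀ x : 𝒜, ‖star x * x‖ ≤ K * ‖E (star x * x)‖) {r : 𝒜} (hr : E r = r) (x : 𝒜) :
    ‖x * r‖ ^ 2 ≤ K * ‖star r * E (star x * x) * r‖ := by
  have hconj : star (x * r) * (x * r) = star r * (star x * x) * r := by
    simp only [star_mul, mul_assoc]
  rw [sq, ← CStarRing.norm_star_mul_self, ← hE.map_star_mul_mul hr, ← hconj]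
  exact hnorm _

lemma star_mul_self_le_add_algebraMap [StarOrderedRing 𝒜] (hE : IsCondExp E) {K : ℝ}
    (hK : 0 ≤ K) (hnorm : ∀ x : 𝒜, ‖star x * x‖ ≤ K * ‖E (star x * x)‖) (x : 𝒜) {t : ℝ}
    (ht : 0 < t) : star x * x ≤ K • E (star x * x) + algebraMap ℝ 𝒜 t := by
  set d := K • E (star x * x)
  have hd : 0 ≤ d := smul_nonneg hK (hE.pos _ (star_mul_self_nonneg x))
  set b := d + algebraMap ℝ 𝒜 t
  have hb : IsStrictlyPositive b := (isStrictlyPositive_algebraMap ht).nonneg_add hd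
  have hEb : E b = b := by
    simp only [b, d, Algebra.algebraMap_eq_smul_one, hE.map_add, hE.map_real_smul, hE.idem,
      hE.map_one]
  set r := b ^ (-(1 / 2) : ℝ)
  have hr : E r = r := hE.map_rpow hEb hb.nonneg _
  have hr_sa : IsSelfAdjoint r := .of_nonneg rpow_nonneg
  have hdr : ‖r * d * r‖ ≤ 1 := by
    rw [CStarAlgebra.norm_le_one_iff_of_nonneg _ (conjugate_nonneg_of_nonneg hd rpow_nonneg)]
    calc r * d * r ≤ r * b * r :=
          hr_sa.conjugate_le_conjugate (le_add_of_nonneg_right (algebraMap_nonneg 𝒜 ht.le))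
      _ = 1 := conjugate_rpow_neg_one_half b
  have hxr : ‖x * r‖ ^ 2 ≤ 1 :=
    calc ‖x * r‖ ^ 2 ≤ K * ‖star r * E (star x * x) * r‖ := hE.norm_mul_sq_le hnorm hr x
      _ = ‖r * d * r‖ := by
        rw [hr_sa.star_eq, mul_smul_comm, smul_mul_assoc, norm_smul, Real.norm_of_nonneg hK]
      _ ≤ 1 := hdr
  rw [star_mul_self_le_iff_norm_mul_rpow x hb]
  exact (sq_le_one_iff₀ (norm_nonneg _)).mp hxr

end IsCondExp

end

theorem condexp_norm_bound_implies_order_bound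
    (E : A → A) (hE : IsCondExp E) (K : ℝ) (hK : 0 < K)
    (hnorm : ∀ x : A, ‖star x * x‖ ≤ K * ‖E (star x * x)‖) :
    (∀ a : A, star a * a ≤ K • E (star a * a)) ∧
    (∀ a : A, 0 ≤ a → 0 ≤ K • E a - a) := by
  have hmain : ∀ a : A, star a * a ≤ K • E (star a * a) := fun a =>
    le_of_forall_pos_le_add_algebraMap fun t ht =>
      hE.star_mul_self_le_add_algebraMap hK.le hnorm a ht
  refine ⟨hmain, fun a ha => ?_⟩
  obtain ⟨x, rfl⟩ := CStarAlgebra.nonneg_iff_eq_star_mul_self.mp ha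
  exact sub_nonneg.mpr (hmain x)
end

section
/- Let A be a unital C*-algebra, E a conditional expectation on A, and K ≥ 1 a real number such that the map K·E − id_A is positive. Then E is faithful and ‖a‖² ≤ K·‖E(a* a)‖ for every a ∈ A; consequently the norm a ↦ ‖E(a* a)‖^{1/2} is equivalent to the C*-norm of A, and in particular A is complete with respect to it. -/
variable {A : Type*} [CStarAlgebra A] [PartialOrder A] [StarOrderedRing A]

theorem condexp_pos_implies_faithful_norm_equiv_complete
    (E : A → A) (hE : IsCondExp E) (K : ℝ) (hK : 1 ≤ K)
    (hpos : ∀ a : A, 0 ≤ a → 0 ≤ K • E a - a) :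
    (∀ a : A, E (star a * a) = 0 → a = 0) ∧
    (∀ a : A, ‖a‖ ^ 2 ≤ K * ‖E (star a * a)‖) ∧
    (∃ c : ℝ, 0 < c ∧ ∃ C : ℝ, 0 < C ∧ ∀ a : A,
        c * ‖a‖ ≤ Real.sqrt ‖E (star a * a)‖ ∧ Real.sqrt ‖E (star a * a)‖ ≤ C * ‖a‖) ∧
    (∀ u : ℕ → A,
      (∀ ε : ℝ, 0 < ε → ∃ N : ℕ, ∀ n ≥ N, ∀ m ≥ N,
        ‖E (star (u n - u m) * (u n - u m))‖ < ε) →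
      ∃ a : A, Filter.Tendsto (fun n => ‖E (star (u n - a) * (u n - a))‖)
        Filter.atTop (nhds 0)) := by
  have hK0 : (0:ℝ) < K := lt_of_lt_of_le one_pos hK
  -- main inequality
  have key : ∀ a : A, ‖a‖ ^ 2 ≤ K * ‖E (star a * a)‖ := by
    intro a
    have hx : (0:A) ≤ star a * a := star_mul_self_nonneg a
    have hle : star a * a ≤ K • E (star a * a) := sub_nonneg.mp (hpos _ hx)
    have h1 : ‖star a * a‖ ≤ ‖K • E (star a * a)‖ :=
      CStarAlgebra.norm_le_norm_of_nonneg_of_le hx hle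
    have h2 : ‖K • E (star a * a)‖ = K * ‖E (star a * a)‖ := by
      rw [norm_smul, Real.norm_of_nonneg hK0.le]
    have h3 : ‖star a * a‖ = ‖a‖ * ‖a‖ := CStarRing.norm_star_mul_self
    rw [sq]
    rw [h3] at h1; rw [h2] at h1
    linarith
  have upper : ∀ a : A, ‖E (star a * a)‖ ≤ ‖a‖ ^ 2 := by
    intro a
    calc ‖E (star a * a)‖ ≤ ‖star a * a‖ := hE.contractive _
      _ = ‖a‖ * ‖a‖ := CStarRing.norm_star_mul_self
      _ = ‖a‖ ^ 2 := (sq _).symm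
  have faithful : ∀ a : A, E (star a * a) = 0 → a = 0 := by
    intro a ha
    have := key a
    rw [ha, norm_zero, mul_zero] at this
    have : ‖a‖ = 0 := by nlinarith [norm_nonneg a, sq_nonneg ‖a‖]
    simpa using this
  refine ⟨faithful, key, ?_, ?_⟩
  · refine ⟨(Real.sqrt K)⁻¹, inv_pos.mpr (Real.sqrt_pos.mpr hK0), 1, one_pos, fun a => ?_⟩
    constructor
    · rw [inv_mul_le_iff₀ (Real.sqrt_pos.mpr hK0)]
      have h1 : ‖a‖ = Real.sqrt (‖a‖ ^ 2) := (Real.sqrt_sq (norm_nonneg a)).symm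
      rw [h1, ← Real.sqrt_mul hK0.le]
      exact Real.sqrt_le_sqrt (key a)
    · rw [one_mul]
      have := Real.sqrt_le_sqrt (upper a)
      rwa [Real.sqrt_sq (norm_nonneg a)] at this
  · intro u hu
    have hcau : CauchySeq u := by
      rw [Metric.cauchySeq_iff]
      intro ε hε
      obtain ⟨N, hN⟩ := hu (ε ^ 2 / K) (by positivity)
      refine ⟨N, fun n hn m hm => ?_⟩
      have h1 := key (u n - u m)
      have h2 := hN n hn m hm
      have h3 : ‖u n - u m‖ ^ 2 < ε ^ 2 := by
        calc ‖u n - u m‖ ^ 2 ≤ K * ‖E (star (u n - u m) * (u n - u m))‖ := h1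
          _ < K * (ε ^ 2 / K) := by exact (mul_lt_mul_iff_right₀ hK0).mpr h2
          _ = ε ^ 2 := by field_simp
      rw [dist_eq_norm]
      exact lt_of_pow_lt_pow_left₀ 2 hε.le h3
    obtain ⟨a, ha⟩ := cauchySeq_tendsto_of_complete hcau
    refine ⟨a, ?_⟩
    have hn0 : Filter.Tendsto (fun n => ‖u n - a‖) Filter.atTop (nhds 0) := by
      rw [← tendsto_iff_norm_sub_tendsto_zero] at *
      exact ha
    have hsq : Filter.Tendsto (fun n => ‖u n - a‖ ^ 2) Filter.atTop (nhds 0) := by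
      have := hn0.mul hn0
      simpa [sq] using this
    exact squeeze_zero (fun n => norm_nonneg _) (fun n => upper (u n - a)) hsq
end

section
/- Let A be a unital C*-algebra, E a conditional expectation on A with range B, and K ≥ 1 a real number such that K·E − id_A is positive. Let p ∈ B be a projection that is minimal in B, i.e. for every b ∈ B the element p b p is a complex scalar multiple of p. If q ∈ A is a nonzero projection with q ≤ p (that is, q p = q), then there exists a real number μ with K⁻¹ ≤ μ ≤ 1 such that E(q) = μ·p. -/
variable {A : Type*} [CStarAlgebra A] [PartialOrder A] [StarOrderedRing A]

private lemma smul_nonneg_aux {r : ℝ} {q : A} (hq : 0 ≤ q) (hqne : q ≠ 0)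
    (h : 0 ≤ r • q) : 0 ≤ r := by
  by_contra hr
  push_neg at hr
  have h2 : 0 ≤ (-r) • q := smul_nonneg (by linarith) hq
  have h3 : r • q = 0 := le_antisymm (by simpa [neg_smul] using neg_nonneg.mp (by simpa [neg_smul] using h2)) h
  rcases smul_eq_zero.mp h3 with h | h
  · linarith
  · exact hqne h

theorem condexp_subprojection_of_minimal
    (E : A → A) (hE : IsCondExp E) (K : ℝ) (hK : 1 ≤ K)
    (hpos : ∀ a : A, 0 ≤ a → 0 ≤ K • E a - a)
    (p : A) (hpB : E p = p) (hpstar : star p = p) (hpidem : p * p = p)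
    (hpmin : ∀ b : A, ∃ c : ℂ, p * E b * p = c • p)
    (q : A) (hqstar : star q = q) (hqidem : q * q = q) (hqne : q ≠ 0)
    (hqp : q * p = q) :
    ∃ μ : ℝ, K⁻¹ ≤ μ ∧ μ ≤ 1 ∧ E q = μ • p := by
  have hpq : p * q = q := by
    have := congrArg star hqp
    rwa [star_mul, hpstar, hqstar] at this
  have hpne : p ≠ 0 := fun h => hqne (by rw [← hqp, h, mul_zero])
  -- E q = c • p
  obtain ⟨c, hc⟩ := hpmin q
  have hEq : E q = c • p := by
    have h1 : E (E p * q * E p) = E p * E q * E p := hE.bimod q p p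
    rw [hpB, show p * q * p = q from by rw [hpq, hqp]] at h1
    rw [h1, hc]
  -- q is nonneg
  have hqnn : 0 ≤ q := by
    have : q = star q * q := by rw [hqstar, hqidem]
    rw [this]; exact star_mul_self_nonneg q
  -- E q nonneg
  have hEqnn : 0 ≤ E q := hE.pos q hqnn
  -- c is real
  have hsa : star (E q) = E q := (IsSelfAdjoint.of_nonneg hEqnn)
  have hcre : (starRingEnd ℂ) c = c := by
    rw [hEq, star_smul, hpstar] at hsa
    by_contra h
    have : ((starRingEnd ℂ) c - c) • p = 0 := by
      rw [sub_smul, starRingEnd_apply, hsa, sub_self]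
    rcases smul_eq_zero.mp this with h' | h'
    · exact h (by linear_combination h')
    · exact hpne h'
  set μ : ℝ := c.re with hμ
  have hcμ : c = (μ : ℂ) := by
    have := Complex.conj_eq_iff_re.mp hcre
    simpa [hμ] using this.symm
  have hEqμ : E q = μ • p := by
    rw [hEq, hcμ, Complex.coe_smul]
  refine ⟨μ, ?_, ?_, hEqμ⟩
  · -- lower bound: conjugate K • E q - q by q
    have h0 : 0 ≤ K • E q - q := hpos q hqnn
    have h1 : 0 ≤ star q * (K • E q - q) * q := star_left_conjugate_nonneg h0 q
    have hqpq : q * p * q = q := by rw [hqp, hqidem]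
    have h2 : star q * (K • E q - q) * q = (K * μ - 1) • q := by
      rw [hqstar, hEqμ]
      simp only [mul_sub, sub_mul, mul_smul_comm, smul_mul_assoc, hqpq, hqidem,
        smul_smul, sub_smul, one_smul]
    rw [h2] at h1
    have h3 := smul_nonneg_aux hqnn hqne h1
    have hK0 : (0:ℝ) < K := lt_of_lt_of_le one_pos hK
    rw [inv_eq_one_div, div_le_iff₀ hK0]
    nlinarith
  · -- upper bound: p - q nonneg, conjugate E(p-q) by q
    have hpqnn : 0 ≤ p - q := by
      have hsub : (p - q) * (p - q) = p - q := by
        rw [sub_mul, mul_sub, mul_sub, hpidem, hqidem, hpq, hqp]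
        abel
      have hsubstar : star (p - q) = p - q := by rw [star_sub, hpstar, hqstar]
      calc (0:A) ≤ star (p - q) * (p - q) := star_mul_self_nonneg _
        _ = p - q := by rw [hsubstar, hsub]
    have hEsub : E (p - q) = (1 - μ) • p := by
      have : p - q = p + (-1 : ℂ) • q := by simp [sub_eq_add_neg]
      rw [this, hE.map_add, hE.map_smul, hpB, hEqμ, neg_one_smul, sub_smul, one_smul,
        ← sub_eq_add_neg]
    have h0 : 0 ≤ E (p - q) := hE.pos _ hpqnn
    rw [hEsub] at h0
    have h1 : 0 ≤ star q * ((1 - μ) • p) * q := star_left_conjugate_nonneg h0 q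
    have h2 : star q * ((1 - μ) • p) * q = (1 - μ) • q := by
      rw [hqstar, mul_smul_comm, smul_mul_assoc, hqp, hqidem]
    rw [h2] at h1
    have := smul_nonneg_aux hqnn hqne h1
    linarith
end

section
/- Let A be a unital C*-algebra, E a conditional expectation on A with range B, and K ≥ 1 a real number such that K·E − id_A is positive. Let p ∈ B be a projection that is minimal in B, i.e. for every b ∈ B the element p b p is a complex scalar multiple of p. If q₁, …, q_n are pairwise orthogonal nonzero projections in A with q₁ + ⋯ + q_n = p, then n ≤ K; in particular n ≤ ⌊K⌋, the integer part of K. -/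
variable {A : Type*} [CStarAlgebra A] [PartialOrder A] [StarOrderedRing A]

private lemma smul_nonneg_scalar' {r : ℝ} {x : A} (hx : 0 ≤ x) (hxne : x ≠ 0)
    (h : 0 ≤ r • x) : 0 ≤ r := by
  by_contra hr
  push_neg at hr
  have h2 : 0 ≤ (-r) • x := smul_nonneg (by linarith) hx
  have h3 : r • x = 0 := le_antisymm (by simpa [neg_smul, neg_nonneg] using h2) h
  rcases smul_eq_zero.mp h3 with h4 | h4
  · exact absurd h4 (by linarith)
  · exact hxne h4

private lemma real_coe_smul (r : ℝ) (x : A) : (r : ℂ) • x = r • x := by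
  rw [← smul_one_smul ℂ r x]; norm_num

theorem condexp_minimal_decomposition_bound
    (E : A → A) (hE : IsCondExp E) (K : ℝ) (hK : 1 ≤ K)
    (hpos : ∀ a : A, 0 ≤ a → 0 ≤ K • E a - a)
    (p : A) (hpB : E p = p) (hpstar : star p = p) (hpidem : p * p = p)
    (hpmin : ∀ b : A, ∃ c : ℂ, p * E b * p = c • p)
    (n : ℕ) (q : Fin n → A)
    (hqstar : ∀ i, star (q i) = q i) (hqidem : ∀ i, q i * q i = q i)
    (hqne : ∀ i, q i ≠ 0) (horth : ∀ i j, i ≠ j → q i * q j = 0)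
    (hsum : ∑ i, q i = p) :
    (n : ℝ) ≤ K ∧ (n : ℤ) ≤ ⌊K⌋ := by
  have hKpos : (0:ℝ) < K := by linarith
  have main : (n : ℝ) ≤ K := by
    rcases Nat.eq_zero_or_pos n with hn | hn
    · simp [hn]; linarith
    -- p ≠ 0
    have hpq : ∀ i, p * q i = q i := by
      intro i
      rw [← hsum, Finset.sum_mul]
      rw [Finset.sum_eq_single i (fun j _ hj => horth j i hj) (by simp)]
      exact hqidem i
    have hqp : ∀ i, q i * p = q i := by
      intro i
      rw [← hsum, Finset.mul_sum]
      rw [Finset.sum_eq_single i (fun j _ hj => horth i j (Ne.symm hj)) (by simp)]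
      exact hqidem i
    have hpne : p ≠ 0 := by
      intro h
      exact hqne ⟨0, hn⟩ (by rw [← hpq ⟨0, hn⟩, h, zero_mul])
    -- E as a linear map for map_sum
    let F : A →ₗ[ℂ] A :=
      { toFun := E, map_add' := hE.map_add, map_smul' := hE.map_smul }
    have hFE : ∀ a, F a = E a := fun _ => rfl
    -- q i nonneg
    have hqpos : ∀ i, 0 ≤ q i := by
      intro i
      have := star_mul_self_nonneg (q i)
      rwa [hqstar i, hqidem i] at this
    -- choose scalars
    choose c hc using fun i => hpmin (q i)
    have hEq : ∀ i, E (q i) = c i • p := by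
      intro i
      have key : p * q i * p = q i := by rw [mul_assoc, hqp i, hpq i]
      have hb := hE.bimod (q i) p p
      rw [hpB] at hb
      conv_lhs => rw [← key]
      rw [hb, hc i]
    -- c i is real
    have hself : ∀ i, (starRingEnd ℂ) (c i) = c i := by
      intro i
      have h1 : IsSelfAdjoint (E (q i)) := .of_nonneg (hE.pos _ (hqpos i))
      have h2 : (starRingEnd ℂ) (c i) • p = c i • p := by
        have := h1.star_eq
        rw [hEq i, star_smul, hpstar] at this
        exact this
      have h3 : ((starRingEnd ℂ) (c i) - c i) • p = 0 := by
        rw [sub_smul, h2, sub_self]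
      rcases smul_eq_zero.mp h3 with h4 | h4
      · exact sub_eq_zero.mp h4
      · exact absurd h4 hpne
    have hcr : ∀ i, (((c i).re : ℝ) : ℂ) = c i := fun i =>
      Complex.conj_eq_iff_re.mp (hself i)
    -- each real part is at least 1/K
    have hlower : ∀ i, 1 / K ≤ (c i).re := by
      intro i
      have e1 : q i * (K • E (q i) - q i) * q i = (K * (c i).re - 1) • q i := by
        conv_lhs => rw [hEq i, ← hcr i, real_coe_smul, smul_smul, mul_sub,
          mul_smul_comm, hqp i, hqidem i, sub_mul, smul_mul_assoc, hqidem i]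
        rw [sub_smul, one_smul]
      have h6 : 0 ≤ q i * (K • E (q i) - q i) * q i := by
        have := star_left_conjugate_nonneg (hpos (q i) (hqpos i)) (q i)
        rwa [hqstar i] at this
      rw [e1] at h6
      have h7 := smul_nonneg_scalar' (hqpos i) (hqne i) h6
      rw [div_le_iff₀ hKpos, mul_comm]
      linarith
    -- the scalars sum to 1
    have hsum1 : ∑ i, (c i).re = 1 := by
      have hEsum : p = ∑ i, E (q i) := by
        conv_lhs => rw [← hpB, ← hsum]
        exact map_sum F q Finset.univ
      have h8 : ((∑ i, c i) - 1) • p = 0 := by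
        rw [sub_smul, one_smul, Finset.sum_smul, sub_eq_zero]
        conv_rhs => rw [hEsum]
        exact Finset.sum_congr rfl fun i _ => (hEq i).symm
      rcases smul_eq_zero.mp h8 with h9 | h9
      · have h10 : ∑ i, c i = 1 := sub_eq_zero.mp h9
        have := congrArg Complex.re h10
        simpa [Complex.re_sum] using this
      · exact absurd h9 hpne
    have h11 : (n : ℝ) * (1 / K) ≤ ∑ i, (c i).re := by
      have h12 := Finset.sum_le_sum fun i (_ : i ∈ Finset.univ) => hlower i
      simpa [mul_comm] using h12
    rw [hsum1, mul_one_div, div_le_one hKpos] at h11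
    exact h11
  exact ⟨main, Int.le_floor.mpr (by exact_mod_cast main)⟩
end

section
/- Let A be a unital C*-algebra, E a conditional expectation on A, and K ≥ 1 a real number such that K·E − id_A is positive. Then for every self-adjoint element a ∈ A the inequalities 0 ≤ (E(a) − a)² ≤ (K − 1)·(E(a²) − E(a)²) hold in the order of A. -/
noncomputable def hatF (δ : ℝ) (i : ℤ) : ℝ → ℝ := fun u => max 0 (1 - |u/δ - i|)

lemma hatF_nonneg (δ : ℝ) (i : ℤ) (u : ℝ) : 0 ≤ hatF δ i u := le_max_left _ _

lemma hatF_continuous (δ : ℝ) (i : ℤ) : Continuous (hatF δ i) := by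
  unfold hatF; fun_prop

lemma hat_sum_eq (δ : ℝ) (hδ : 0 < δ) (N : ℕ) (u : ℝ) (hu : |u| ≤ N * δ) (g : ℤ → ℝ) :
    ∑ i ∈ Finset.Icc (-(N:ℤ)-1) ((N:ℤ)+1), g i * hatF δ i u
      = g ⌊u/δ⌋ * (1 - (u/δ - ⌊u/δ⌋)) + g (⌊u/δ⌋ + 1) * (u/δ - ⌊u/δ⌋) := by
  set v := u/δ with hv
  set k := ⌊v⌋ with hk
  have hθ0 : 0 ≤ v - k := sub_nonneg.2 (Int.floor_le v)
  have hθ1 : v - k < 1 := by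
    have := Int.lt_floor_add_one v; push_cast at this ⊢; linarith
  have hvN : |v| ≤ (N : ℝ) := by
    rw [hv, abs_div, abs_of_pos hδ, div_le_iff₀ hδ]; exact hu
  have hvN' := abs_le.1 hvN
  have hkmem : k ∈ Finset.Icc (-(N:ℤ)-1) ((N:ℤ)+1) := by
    rw [Finset.mem_Icc]
    constructor
    · have : ((-(N:ℤ)-1 : ℤ) : ℝ) ≤ v := by push_cast; linarith
      exact Int.le_floor.2 this
    · have : k ≤ (N:ℤ) := by exact_mod_cast le_trans (Int.floor_le v) hvN'.2
      omega
  have hk1mem : k + 1 ∈ Finset.Icc (-(N:ℤ)-1) ((N:ℤ)+1) := by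
    rw [Finset.mem_Icc] at hkmem ⊢
    constructor
    · omega
    · have : k ≤ (N:ℤ) := by exact_mod_cast le_trans (Int.floor_le v) hvN'.2
      omega
  have hsub : ({k, k+1} : Finset ℤ) ⊆ Finset.Icc (-(N:ℤ)-1) ((N:ℤ)+1) := by
    intro i hi
    rcases Finset.mem_insert.1 hi with h | h
    · exact h ▸ hkmem
    · exact (Finset.mem_singleton.1 h) ▸ hk1mem
  have hvanish : ∀ i ∈ Finset.Icc (-(N:ℤ)-1) ((N:ℤ)+1), i ∉ ({k, k+1} : Finset ℤ) →
      g i * hatF δ i u = 0 := by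
    intro i _ hi
    simp only [Finset.mem_insert, Finset.mem_singleton, not_or] at hi
    have hzero : hatF δ i u = 0 := by
      have habs : 1 ≤ |v - i| := by
        rcases lt_or_gt_of_ne hi.1 with h | h
        · have h' : i ≤ k - 1 := by omega
          have : (i : ℝ) ≤ (k : ℝ) - 1 := by exact_mod_cast h'
          rw [abs_of_nonneg (by linarith)]; linarith
        · have h' : k + 2 ≤ i := by omega
          have : (k : ℝ) + 2 ≤ (i : ℝ) := by exact_mod_cast h'
          rw [abs_of_nonpos (by linarith)]; linarith
      simp only [hatF, ← hv]
      exact max_eq_left (by linarith)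
    rw [hzero, mul_zero]
  rw [← Finset.sum_subset hsub hvanish]
  have hkk1 : k ∉ ({k+1} : Finset ℤ) := by simp
  rw [Finset.sum_insert hkk1, Finset.sum_singleton]
  have h1 : hatF δ k u = 1 - (v - k) := by
    simp only [hatF, ← hv]
    rw [abs_of_nonneg hθ0]
    exact max_eq_right (by linarith)
  have h2 : hatF δ (k+1) u = v - k := by
    simp only [hatF, ← hv]
    push_cast
    rw [abs_of_nonpos (by linarith), max_eq_right (by linarith)]
    ring
  rw [h1, h2]

lemma hat_sum_one (δ : ℝ) (hδ : 0 < δ) (N : ℕ) (u : ℝ) (hu : |u| ≤ N * δ) :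
    ∑ i ∈ Finset.Icc (-(N:ℤ)-1) ((N:ℤ)+1), hatF δ i u = 1 := by
  have := hat_sum_eq δ hδ N u hu (fun _ => 1)
  simp only [one_mul] at this
  rw [this]; ring

lemma hat_sum_id (δ : ℝ) (hδ : 0 < δ) (N : ℕ) (u : ℝ) (hu : |u| ≤ N * δ) :
    ∑ i ∈ Finset.Icc (-(N:ℤ)-1) ((N:ℤ)+1), ((i:ℝ) * δ) * hatF δ i u = u := by
  rw [hat_sum_eq δ hδ N u hu (fun i => (i:ℝ) * δ)]
  have hvu : (u/δ) * δ = u := div_mul_cancel₀ u hδ.ne'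
  push_cast
  nlinarith [hvu]

lemma hat_sum_sq (δ : ℝ) (hδ : 0 < δ) (N : ℕ) (u : ℝ) (hu : |u| ≤ N * δ) :
    u^2 ≤ ∑ i ∈ Finset.Icc (-(N:ℤ)-1) ((N:ℤ)+1), ((i:ℝ) * δ)^2 * hatF δ i u ∧
    ∑ i ∈ Finset.Icc (-(N:ℤ)-1) ((N:ℤ)+1), ((i:ℝ) * δ)^2 * hatF δ i u ≤ u^2 + δ^2 := by
  rw [hat_sum_eq δ hδ N u hu (fun i => ((i:ℝ) * δ)^2)]
  set v := u/δ with hv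
  set k := ⌊v⌋ with hk
  have hθ0 : 0 ≤ v - k := sub_nonneg.2 (Int.floor_le v)
  have hθ1 : v - k < 1 := by
    have := Int.lt_floor_add_one v; push_cast at this ⊢; linarith
  have hvu : v * δ = u := div_mul_cancel₀ u hδ.ne'
  have hu2 : u^2 = (v*δ)^2 := by rw [hvu]
  push_cast
  constructor
  · nlinarith [hu2, mul_nonneg (mul_nonneg (sq_nonneg δ) hθ0) (sub_nonneg.2 hθ1.le)]
  · nlinarith [hu2, mul_nonneg (sq_nonneg δ) (sub_nonneg.2 hθ1.le),
      mul_nonneg (sq_nonneg δ) (sq_nonneg (v - k))]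

open Finset in
lemma cfc_approx {A : Type*} [CStarAlgebra A] [PartialOrder A] [StarOrderedRing A]
    (x : A) (hx : IsSelfAdjoint x) (δ : ℝ) (hδ : 0 < δ) :
    ∃ (s : Finset ℤ) (t : ℤ → ℝ) (p : ℤ → A),
      (∀ i ∈ s, 0 ≤ p i) ∧ (∑ i ∈ s, p i) = 1 ∧ (∑ i ∈ s, t i • p i) = x ∧
      x^2 ≤ (∑ i ∈ s, (t i)^2 • p i) ∧ (∑ i ∈ s, (t i)^2 • p i) ≤ x^2 + δ^2 • 1 := by
  set M : ℝ := ‖x‖ * ‖(1:A)‖ with hM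
  set N : ℕ := ⌈M / δ⌉₊ with hN
  have hMN : M ≤ N * δ := by
    rw [← div_le_iff₀ hδ]
    exact Nat.le_ceil _
  have hspec : ∀ u ∈ spectrum ℝ x, |u| ≤ N * δ := fun u hu => by
    refine le_trans ?_ hMN
    simpa using spectrum.norm_le_norm_mul_of_mem hu
  set s : Finset ℤ := Finset.Icc (-(N:ℤ)-1) ((N:ℤ)+1) with hs
  refine ⟨s, fun i => (i:ℝ) * δ, fun i => cfc (hatF δ i) x, ?_, ?_, ?_, ?_, ?_⟩
  · exact fun i _ => cfc_nonneg (fun u _ => hatF_nonneg δ i u)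
  · rw [← cfc_sum (fun i => hatF δ i) x s (fun i _ => (hatF_continuous δ i).continuousOn)]
    rw [show (∑ i ∈ s, hatF δ i) = fun u => ∑ i ∈ s, hatF δ i u from by ext u; simp]
    calc cfc (fun u => ∑ i ∈ s, hatF δ i u) x
        = cfc (fun _ : ℝ => (1:ℝ)) x :=
          cfc_congr (fun u hu => hat_sum_one δ hδ N u (hspec u hu))
      _ = 1 := by rw [cfc_const 1 x hx, map_one]
  · have h1 : ∀ i ∈ s, ((i:ℝ) * δ) • cfc (hatF δ i) x
        = cfc (fun u => ((i:ℝ) * δ) * hatF δ i u) x := by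
      intro i _
      rw [← cfc_smul ((i:ℝ)*δ) (hatF δ i) x ((hatF_continuous δ i).continuousOn)]
      simp [smul_eq_mul]
    rw [Finset.sum_congr rfl h1,
      ← cfc_sum _ x s (fun i _ => by exact (continuous_const.mul (hatF_continuous δ i)).continuousOn)]
    rw [show (∑ i ∈ s, fun u => ((i:ℝ) * δ) * hatF δ i u)
        = fun u => ∑ i ∈ s, ((i:ℝ) * δ) * hatF δ i u from by ext u; simp]
    calc cfc (fun u => ∑ i ∈ s, ((i:ℝ) * δ) * hatF δ i u) x
        = cfc (fun u : ℝ => u) x := cfc_congr (fun u hu => hat_sum_id δ hδ N u (hspec u hu))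
      _ = x := cfc_id' ℝ x
  · have h1 : ∀ i ∈ s, ((i:ℝ) * δ)^2 • cfc (hatF δ i) x
        = cfc (fun u => ((i:ℝ) * δ)^2 * hatF δ i u) x := by
      intro i _
      rw [← cfc_smul (((i:ℝ)*δ)^2) (hatF δ i) x ((hatF_continuous δ i).continuousOn)]
      simp [smul_eq_mul]
    rw [Finset.sum_congr rfl h1,
      ← cfc_sum _ x s (fun i _ => by exact (continuous_const.mul (hatF_continuous δ i)).continuousOn)]
    rw [show (∑ i ∈ s, fun u => ((i:ℝ) * δ)^2 * hatF δ i u)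
        = fun u => ∑ i ∈ s, ((i:ℝ) * δ)^2 * hatF δ i u from by ext u; simp]
    calc x^2 = cfc (fun u : ℝ => u^2) x := (cfc_pow_id x 2).symm
      _ ≤ cfc (fun u => ∑ i ∈ s, ((i:ℝ) * δ)^2 * hatF δ i u) x := by
          refine cfc_mono (fun u hu => (hat_sum_sq δ hδ N u (hspec u hu)).1) ?_ ?_
          · exact (continuous_pow 2).continuousOn
          · exact (continuous_finset_sum s
              (fun i _ => continuous_const.mul (hatF_continuous δ i))).continuousOn
  · have h1 : ∀ i ∈ s, ((i:ℝ) * δ)^2 • cfc (hatF δ i) x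
        = cfc (fun u => ((i:ℝ) * δ)^2 * hatF δ i u) x := by
      intro i _
      rw [← cfc_smul (((i:ℝ)*δ)^2) (hatF δ i) x ((hatF_continuous δ i).continuousOn)]
      simp [smul_eq_mul]
    rw [Finset.sum_congr rfl h1,
      ← cfc_sum _ x s (fun i _ => by exact (continuous_const.mul (hatF_continuous δ i)).continuousOn)]
    rw [show (∑ i ∈ s, fun u => ((i:ℝ) * δ)^2 * hatF δ i u)
        = fun u => ∑ i ∈ s, ((i:ℝ) * δ)^2 * hatF δ i u from by ext u; simp]
    calc cfc (fun u => ∑ i ∈ s, ((i:ℝ) * δ)^2 * hatF δ i u) x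
        ≤ cfc (fun u : ℝ => u^2 + δ^2) x := by
          refine cfc_mono (fun u hu => (hat_sum_sq δ hδ N u (hspec u hu)).2) ?_ ?_
          · exact (continuous_finset_sum s
              (fun i _ => continuous_const.mul (hatF_continuous δ i))).continuousOn
          · exact ((continuous_pow 2).add continuous_const).continuousOn
      _ = x^2 + δ^2 • 1 := by
          rw [cfc_add_const (δ^2) (fun u : ℝ => u^2) x ((continuous_pow 2).continuousOn) hx,
            cfc_pow_id x 2, Algebra.algebraMap_eq_smul_one]

lemma le_of_forall_le_add_smul_one {A : Type*} [CStarAlgebra A] [PartialOrder A]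
    [StarOrderedRing A] (z w : A) (h : ∀ ε : ℝ, 0 < ε → z ≤ w + ε • 1) : z ≤ w := by
  rw [← sub_nonneg]
  have key : Filter.Tendsto (fun n : ℕ => w + ((1:ℝ)/(n+1)) • (1:A) - z) Filter.atTop
      (nhds (w - z)) := by
    have h1 : Filter.Tendsto (fun n : ℕ => ((1:ℝ)/(n+1))) Filter.atTop (nhds 0) :=
      tendsto_one_div_add_atTop_nhds_zero_nat
    have h2 := ((h1.smul_const (1:A)).const_add w).sub (tendsto_const_nhds (x := z))
    simpa using h2
  exact CStarAlgebra.isClosed_nonneg.mem_of_tendsto key (Filter.Eventually.of_forall fun n => by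
    simpa [sub_nonneg] using h (1/(n+1)) (by positivity))

open Finset in
lemma jensen_sq {A : Type*} [CStarAlgebra A] [PartialOrder A] [StarOrderedRing A]
    (s : Finset ℤ) (t : ℤ → ℝ) (q : ℤ → A) (r : ℝ) (hr : 0 < r) (B : A)
    (hq : ∀ i ∈ s, 0 ≤ q i)
    (hS0 : ∑ i ∈ s, q i = r • 1)
    (hS1 : ∑ i ∈ s, t i • q i = B) :
    B^2 ≤ r • ∑ i ∈ s, (t i)^2 • q i := by
  have hB : star B = B := by
    rw [← hS1, star_sum]
    exact Finset.sum_congr rfl fun i hi => by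
      rw [star_smul, star_trivial, (IsSelfAdjoint.of_nonneg (hq i hi)).star_eq]
  set c : ℤ → A := fun i => (t i * r) • (1:A) - B with hc_def
  have hc : ∀ i, star (c i) = c i := fun i => by
    simp [hc_def, star_smul, hB]
  have key : ∀ i ∈ s, c i * q i * c i
      = (r*r) • ((t i)^2 • q i) - r • ((t i • q i) * B) - r • (B * (t i • q i))
        + B * q i * B := by
    intro i _
    simp only [hc_def, sub_mul, mul_sub, smul_mul_assoc, mul_smul_comm, one_mul, mul_one,
      smul_smul, smul_sub, pow_two]
    module
  have hsum : ∑ i ∈ s, c i * q i * c i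
      = (r*r) • (∑ i ∈ s, (t i)^2 • q i) - r • (B * B) := by
    rw [Finset.sum_congr rfl key]
    have hlast : ∑ i ∈ s, B * q i * B = r • (B * B) := by
      rw [← Finset.sum_mul, ← Finset.mul_sum, hS0]
      simp only [smul_mul_assoc, mul_smul_comm, one_mul, mul_one]
    rw [Finset.sum_add_distrib, Finset.sum_sub_distrib, Finset.sum_sub_distrib,
      ← Finset.smul_sum, ← Finset.smul_sum, ← Finset.smul_sum,
      ← Finset.sum_mul, ← Finset.mul_sum, hS1, hlast]
    abel
  have hpos : 0 ≤ ∑ i ∈ s, c i * q i * c i := by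
    refine Finset.sum_nonneg fun i hi => ?_
    have := star_left_conjugate_nonneg (hq i hi) (c i)
    rwa [hc i] at this
  rw [hsum, sub_nonneg] at hpos
  have h2 : r • (B * B) ≤ r • (r • ∑ i ∈ s, (t i)^2 • q i) := by
    rwa [smul_smul]
  have h3 := smul_le_smul_of_nonneg_left h2 (inv_nonneg.2 hr.le)
  rw [inv_smul_smul₀ hr.ne' (B*B), inv_smul_smul₀ hr.ne'] at h3
  rwa [pow_two]


variable {A : Type*} [CStarAlgebra A] [PartialOrder A] [StarOrderedRing A]

section Main
variable (E : A → A)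

/-- E as a real-linear map -/
noncomputable def condExpLin (hE : IsCondExp E) : A →ₗ[ℝ] A where
  toFun := E
  map_add' := hE.map_add
  map_smul' := fun r y => by
    have h1 : r • y = (r : ℂ) • y := by norm_num
    have h2 : (r : ℂ) • E y = r • E y := by norm_num
    simp only [RingHom.id_apply]
    rw [h1, hE.map_smul, h2]

example : True := trivial

lemma condExp_mono (hE : IsCondExp E) (u v : A) (huv : u ≤ v) : E u ≤ E v := by
  have h := hE.pos (v - u) (sub_nonneg.2 huv)
  rwa [show E (v - u) = E v - E u from map_sub (condExpLin E hE) v u, sub_nonneg] at h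

lemma condExp_selfAdjoint (hE : IsCondExp E) (y : A) (hy : star y = y) : star (E y) = E y := by
  have h1 : (0:A) ≤ y + ‖y‖ • 1 := by
    have h := IsSelfAdjoint.neg_algebraMap_norm_le_self (a := y) hy
    rw [Algebra.algebraMap_eq_smul_one] at h
    have h' := sub_nonneg.2 h
    rwa [sub_neg_eq_add] at h'
  have h2 : (0:A) ≤ E y + ‖y‖ • 1 := by
    have := hE.pos _ h1
    have hsm : E (‖y‖ • (1:A)) = ‖y‖ • 1 := by
      rw [show (‖y‖ • (1:A)) = ((‖y‖:ℂ) • 1) by norm_num, hE.map_smul, hE.map_one]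
    rwa [hE.map_add, hsm] at this
  have h3 := (IsSelfAdjoint.of_nonneg h2).star_eq
  have h4 : star (E y + ‖y‖ • (1:A)) = star (E y) + ‖y‖ • 1 := by
    rw [star_add, star_smul, star_one]
    simp only [star_trivial]
  rw [h4] at h3
  exact add_right_cancel h3

end Main

theorem condexp_kadison_variance_inequality
    (E : A → A) (hE : IsCondExp E) (K : ℝ) (hK : 1 ≤ K)
    (hpos : ∀ a : A, 0 ≤ a → 0 ≤ K • E a - a) :
    ∀ a : A, star a = a →
      0 ≤ (E a - a) ^ 2 ∧ (E a - a) ^ 2 ≤ (K - 1) • (E (a ^ 2) - (E a) ^ 2) := by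
  intro a ha
  have hEsub : ∀ u v : A, E (u - v) = E u - E v := fun u v => map_sub (condExpLin E hE) u v
  have hEsum : ∀ (s : Finset ℤ) (f : ℤ → A), E (∑ i ∈ s, f i) = ∑ i ∈ s, E (f i) :=
    fun s f => map_sum (condExpLin E hE) f s
  have hEsmulR : ∀ (c : ℝ) (y : A), E (c • y) = c • E y :=
    fun c y => map_smul (condExpLin E hE) c y
  have hEsa := condExp_selfAdjoint E hE a ha
  have hxsa : star (E a - a) = E a - a := by rw [star_sub, hEsa, ha]
  have goal1 : (0:A) ≤ (E a - a)^2 := by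
    have h := star_mul_self_nonneg (E a - a)
    rwa [hxsa, ← pow_two] at h
  refine ⟨goal1, ?_⟩
  rcases hK.eq_or_lt with hK1 | hK1
  · -- degenerate case K = 1 : then E is the identity
    have hEge : ∀ b : A, 0 ≤ b → b ≤ E b := fun b hb => by
      have h := hpos b hb
      rw [← hK1, one_smul] at h
      exact sub_nonneg.1 h
    have h1 : (0:A) ≤ a + ‖a‖ • 1 := by
      have h := IsSelfAdjoint.neg_algebraMap_norm_le_self (a := a) ha
      rw [Algebra.algebraMap_eq_smul_one] at h
      have h' := sub_nonneg.2 h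
      rwa [sub_neg_eq_add] at h'
    have h2 : (0:A) ≤ ‖a‖ • 1 - a := by
      have h := IsSelfAdjoint.le_algebraMap_norm_self (a := a) ha
      rw [Algebra.algebraMap_eq_smul_one] at h
      exact sub_nonneg.2 h
    have hsm : E (‖a‖ • (1:A)) = ‖a‖ • 1 := by rw [hEsmulR, hE.map_one]
    have g1 := hEge _ h1
    rw [hE.map_add, hsm] at g1
    have g1' : a ≤ E a := by
      have := sub_le_sub_right g1 (‖a‖ • (1:A))
      simpa using this
    have g2 := hEge _ h2
    rw [hEsub, hsm] at g2
    have g2' : E a ≤ a := by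
      have := sub_le_sub g2 (le_refl (‖a‖ • (1:A) : A))
      simpa using sub_nonneg.1 (by simpa using neg_le_neg (sub_le_sub_left g2 (‖a‖ • (1:A))))
    have hid : E a = a := le_antisymm g2' g1'
    rw [← hK1]
    simp [hid]
  · -- main case 1 < K
    set x := E a - a with hxdef
    have hEx : E x = 0 := by rw [hxdef, hEsub, hE.idem, sub_self]
    have hEx2 : E (x^2) = E (a^2) - (E a)^2 := by
      have hexp : x^2 = (E a * E a - E a * a) - (a * E a - a * a) := by
        rw [hxdef]; noncomm_ring
      have h2 : E (E a * a) = E a * E a := by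
        have h := hE.bimod a a 1
        rw [hE.map_one, mul_one, mul_one] at h
        exact h
      have h3 : E (a * E a) = E a * E a := by
        have h := hE.bimod a 1 a
        rw [hE.map_one, one_mul, one_mul] at h
        exact h
      rw [hexp, hEsub, hEsub, hEsub, hE.range_mul a a, h2, h3,
        show a * a = a^2 from (pow_two a).symm,
        show E a * E a = (E a)^2 from (pow_two (E a)).symm]
      abel
    set r := K - 1 with hrdef
    have hr : 0 < r := by rw [hrdef]; linarith
    have hK0 : 0 < K := by linarith
    have main : ∀ ε : ℝ, 0 < ε → x^2 ≤ r • (K • E (x^2) - x^2) + ε • 1 := by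
      intro ε hε
      have hrK : 0 < r * K := mul_pos hr hK0
      set δ := Real.sqrt (ε / (r * K)) with hδdef
      have hδ : 0 < δ := Real.sqrt_pos.2 (div_pos hε hrK)
      have hδ2 : r * (K * δ^2) = ε := by
        rw [hδdef, Real.sq_sqrt (div_pos hε hrK).le]
        field_simp
      obtain ⟨s, t, p, hp, hone, hidp, hsq1, hsq2⟩ := cfc_approx x hxsa δ hδ
      set q : ℤ → A := fun i => K • E (p i) - p i with hqdef
      have hq : ∀ i ∈ s, 0 ≤ q i := fun i hi => hpos (p i) (hp i hi)
      have hq0 : ∑ i ∈ s, q i = r • 1 := by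
        calc ∑ i ∈ s, q i = K • E (∑ i ∈ s, p i) - ∑ i ∈ s, p i := by
              rw [hEsum, Finset.smul_sum, ← Finset.sum_sub_distrib]
          _ = r • 1 := by rw [hone, hE.map_one, hrdef, sub_smul, one_smul]
      have hq1 : ∑ i ∈ s, t i • q i = -x := by
        have hterm : ∀ i ∈ s, t i • q i = K • E (t i • p i) - t i • p i := fun i _ => by
          rw [hqdef]
          simp only [smul_sub, hEsmulR, smul_comm (t i) K]
        calc ∑ i ∈ s, t i • q i = K • E (∑ i ∈ s, t i • p i) - ∑ i ∈ s, t i • p i := by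
              rw [Finset.sum_congr rfl hterm, hEsum, Finset.smul_sum, ← Finset.sum_sub_distrib]
          _ = -x := by rw [hidp, hEx, smul_zero, zero_sub]
      set w := ∑ i ∈ s, (t i)^2 • p i with hwdef
      have hq2 : ∑ i ∈ s, (t i)^2 • q i = K • E w - w := by
        have hterm : ∀ i ∈ s, (t i)^2 • q i = K • E ((t i)^2 • p i) - (t i)^2 • p i :=
          fun i _ => by
            rw [hqdef]
            simp only [smul_sub, hEsmulR, smul_comm ((t i)^2) K]
        calc ∑ i ∈ s, (t i)^2 • q i
            = K • E (∑ i ∈ s, (t i)^2 • p i) - ∑ i ∈ s, (t i)^2 • p i := by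
              rw [Finset.sum_congr rfl hterm, hEsum, Finset.smul_sum, ← Finset.sum_sub_distrib]
          _ = K • E w - w := by rw [hwdef]
      have hjen := jensen_sq s t q r hr (-x) hq hq0 hq1
      rw [neg_sq, hq2] at hjen
      have hEw : E w ≤ E (x^2) + δ^2 • 1 := by
        have h := condExp_mono E hE w (x^2 + δ^2 • 1) hsq2
        rwa [hE.map_add, hEsmulR, hE.map_one] at h
      have hsub : K • E w - w ≤ K • (E (x^2) + δ^2 • 1) - x^2 :=
        sub_le_sub (smul_le_smul_of_nonneg_left hEw hK0.le) hsq1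
      calc x^2 ≤ r • (K • (E (x^2) + δ^2 • 1) - x^2) :=
            le_trans hjen (smul_le_smul_of_nonneg_left hsub hr.le)
        _ = r • (K • E (x^2) - x^2) + ε • 1 := by
            have h : K • (E (x^2) + δ^2 • 1) - x^2 = (K • E (x^2) - x^2) + (K * δ^2) • 1 := by
              rw [smul_add, smul_smul]; abel
            rw [h, smul_add, smul_smul, hδ2]
    have hlim : x^2 ≤ r • (K • E (x^2) - x^2) := le_of_forall_le_add_smul_one _ _ main
    have halg : x^2 ≤ r • E (x^2) := by
      have h1 : x^2 + r • x^2 ≤ (r * K) • E (x^2) := by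
        rw [smul_sub, smul_smul] at hlim
        exact le_sub_iff_add_le.1 hlim
      have hL : x^2 + r • x^2 = K • x^2 := by
        have h : (1:ℝ) + r = K := by rw [hrdef]; ring
        rw [← h, add_smul, one_smul]
      have h2 : K • x^2 ≤ K • (r • E (x^2)) := by
        rw [smul_smul, mul_comm K r, ← hL]
        exact h1
      have h3 := smul_le_smul_of_nonneg_left h2 (inv_nonneg.2 hK0.le)
      rwa [inv_smul_smul₀ hK0.ne', inv_smul_smul₀ hK0.ne'] at h3
    rw [← hEx2]
    exact halg
end

section
/- Let A be a unital C*-algebra, E a conditional expectation on A, and K ≥ 1 a real number such that K·E − id_A is positive. If p ∈ A is a projection, then E(p) is a projection if and only if E(p) = p. -/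
variable {A : Type*} [CStarAlgebra A] [PartialOrder A] [StarOrderedRing A]

theorem condexp_image_of_projection
    (E : A → A) (hE : IsCondExp E) (K : ℝ) (hK : 1 ≤ K)
    (hpos : ∀ a : A, 0 ≤ a → 0 ≤ K • E a - a)
    (p : A) (hpstar : star p = p) (hpidem : p * p = p) :
    (star (E p) = E p ∧ E p * E p = E p) ↔ E p = p := by
  constructor
  · rintro ⟨hqstar, hqidem⟩
    set q := E p with hqdef
    have map_neg : ∀ a : A, E (-a) = -E a := by
      intro a
      have := hE.map_smul (-1) a
      simpa using this
    have map_sub : ∀ a b : A, E (a - b) = E a - E b := by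
      intro a b
      rw [sub_eq_add_neg, hE.map_add, map_neg, sub_eq_add_neg]
    have hEq1 : E (1 - p) = 1 - q := by rw [map_sub, hE.map_one]
    have key : ∀ a : A, 0 ≤ a → E a = 0 → a = 0 := by
      intro a ha hEa
      have h := hpos a ha
      rw [hEa, smul_zero, zero_sub] at h
      exact le_antisymm (neg_nonneg.mp h) ha
    -- first: (1 - q) * p = 0
    have hx : (1 - q) * p = 0 := by
      have hform : ((1 - q) * p) * star ((1 - q) * p) = (1 - q) * p * (1 - q) := by
        rw [star_mul, hpstar, star_sub, star_one, hqstar]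
        calc (1 - q) * p * (p * (1 - q)) = (1 - q) * (p * p) * (1 - q) := by noncomm_ring
          _ = (1 - q) * p * (1 - q) := by rw [hpidem]
      have hEzero : E ((1 - q) * p * (1 - q)) = 0 := by
        have hb := hE.bimod p (1 - p) (1 - p)
        rw [hEq1] at hb
        rw [hb, show (1 - q) * q * (1 - q) = (q - q * q) * (1 - q) by noncomm_ring,
          hqidem, sub_self, zero_mul]
      have : ((1 - q) * p) * star ((1 - q) * p) = 0 := by
        rw [hform]
        exact key _ (by rw [← hform]; exact mul_star_self_nonneg _) hEzero
      exact CStarRing.mul_star_self_eq_zero_iff _ |>.mp this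
    -- second: q * (1 - p) = 0
    have hy : q * (1 - p) = 0 := by
      have h1pstar : star (1 - p) = 1 - p := by rw [star_sub, star_one, hpstar]
      have h1pidem : (1 - p) * (1 - p) = 1 - p := by
        rw [sub_mul, mul_sub, mul_sub, one_mul, mul_one, hpidem]; noncomm_ring
      have hform : (q * (1 - p)) * star (q * (1 - p)) = q * (1 - p) * q := by
        rw [star_mul, h1pstar, hqstar]
        calc q * (1 - p) * ((1 - p) * q) = q * ((1 - p) * (1 - p)) * q := by noncomm_ring
          _ = q * (1 - p) * q := by rw [h1pidem]
      have hEzero : E (q * (1 - p) * q) = 0 := by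
        have hb := hE.bimod (1 - p) p p
        rw [hEq1] at hb
        rw [hb, show q * (1 - q) * q = (q - q * q) * q by noncomm_ring,
          hqidem, sub_self, zero_mul]
      have : (q * (1 - p)) * star (q * (1 - p)) = 0 := by
        rw [hform]
        exact key _ (by rw [← hform]; exact mul_star_self_nonneg _) hEzero
      exact CStarRing.mul_star_self_eq_zero_iff _ |>.mp this
    -- conclude q = p
    have h1 : p = q * p := by
      have := hx
      rw [sub_mul, one_mul, sub_eq_zero] at this
      exact this
    have h2 : q = q * p := by
      have := hy
      rw [mul_sub, mul_one, sub_eq_zero] at this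
      exact this
    rw [h2, ← h1]
  · intro h
    rw [h]
    exact ⟨hpstar, hpidem⟩
end

section
/- Let A be a unital C*-algebra, E a conditional expectation on A, and K ≥ 1 a real number such that K·E − id_A is positive. If a ∈ A is self-adjoint and E(a²) = E(a)², then E(a) = a. -/
variable {A : Type*} [CStarAlgebra A] [PartialOrder A] [StarOrderedRing A]

theorem condexp_multiplicative_element_is_fixed
    (E : A → A) (hE : IsCondExp E) (K : ℝ) (hK : 1 ≤ K)
    (hpos : ∀ a : A, 0 ≤ a → 0 ≤ K • E a - a)
    (a : A) (ha : star a = a) (hsq : E (a ^ 2) = (E a) ^ 2) :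
    E a = a := by
  have hneg : ∀ x : A, E (-x) = -E x := fun x => by
    have := hE.map_smul (-1 : ℂ) x
    simpa using this
  have hsub : ∀ x y : A, E (x - y) = E x - E y := fun x y => by
    rw [sub_eq_add_neg, hE.map_add, hneg, sub_eq_add_neg]
  -- E a is selfadjoint
  have hsaEa : star (E a) = E a := by
    have hsa : IsSelfAdjoint a := ha
    have h1 : E a = E a⁺ - E a⁻ := by
      rw [← hsub, CFC.posPart_sub_negPart a hsa]
    have h2 : (0:A) ≤ E a⁺ := hE.pos _ (CFC.posPart_nonneg a)
    have h3 : (0:A) ≤ E a⁻ := hE.pos _ (CFC.negPart_nonneg a)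
    rw [h1, star_sub, (IsSelfAdjoint.of_nonneg h2), (IsSelfAdjoint.of_nonneg h3)]
  set y := a - E a with hy
  have hsy : star y = y := by rw [hy, star_sub, ha, hsaEa]
  have h1 : E (a * E a) = E a * E a := by
    have := hE.bimod a 1 a
    simpa [hE.map_one] using this
  have h2 : E (E a * a) = E a * E a := by
    have := hE.bimod a a 1
    simpa [hE.map_one] using this
  have h3 : E (E a * E a) = E a * E a := hE.range_mul a a
  have hy2 : y ^ 2 = a ^ 2 - a * E a - (E a * a - E a * E a) := by
    rw [hy]; noncomm_ring
  have hEy2 : E (y ^ 2) = 0 := by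
    rw [hy2, hsub, hsub, hsub, h1, h2, h3, hsq]
    noncomm_ring
  have hy2nonneg : (0:A) ≤ y ^ 2 := by
    have := star_mul_self_nonneg y
    rwa [hsy, ← pow_two] at this
  have hy2nonpos : y ^ 2 ≤ 0 := by
    have := hpos (y ^ 2) hy2nonneg
    rw [hEy2, smul_zero, zero_sub] at this
    exact neg_nonneg.mp this
  have hy20 : y ^ 2 = 0 := le_antisymm hy2nonpos hy2nonneg
  have hny : ‖y‖ = 0 := by
    have := CStarRing.norm_star_mul_self (x := y)
    rw [hsy, ← pow_two, hy20, norm_zero] at this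
    nlinarith [norm_nonneg y]
  have : y = 0 := norm_eq_zero.mp hny
  rw [hy] at this
  exact (sub_eq_zero.mp this).symm
end

section
/- Let M be a finite-dimensional unital C*-algebra and E a faithful conditional expectation on M. Then there exists a real number K ≥ 1 such that the map K·E − id_M is positive. -/
variable {A : Type*} [CStarAlgebra A] [PartialOrder A] [StarOrderedRing A]

/-!
View `M` as a right module over `B = E(M)` with the `B`-valued inner product `E (x⋆ y)`. For a
linear basis `b` of `M`, the frame operator `S x = ∑ bᵢ E(bᵢ⋆ x)` is `B`-symmetric, and injective
by faithfulness of `E`, hence bijective because `M` is finite-dimensional. Choosing `vᵢ` with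
`S vᵢ = bᵢ`, symmetry gives the quasi-basis expansion `x = ∑ bᵢ E(vᵢ⋆ x)`. Writing `a = c⋆c` and
expanding `c` in this way, the Cauchy–Schwarz bound `(∑ xᵢ)⋆(∑ xᵢ) ≤ n ∑ xᵢ⋆xᵢ` and the
Kadison–Schwarz inequality `E(d)⋆E(d) ≤ E(d⋆d)` give `a ≤ n ∑ ‖bᵢ‖²‖vᵢ‖² • E(a)`.
-/

open Finset in
lemma star_sum_mul_sum_le {ι : Type*} (s : Finset ι) (x : ι → A) :
    star (∑ i ∈ s, x i) * ∑ i ∈ s, x i ≤ (#s : ℝ) • ∑ i ∈ s, star (x i) * x i := by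
  have key : ∑ i ∈ s, ∑ j ∈ s, star (x i - x j) * (x i - x j)
      = (2 : ℝ) • ((#s : ℝ) • ∑ i ∈ s, star (x i) * x i - star (∑ i ∈ s, x i) * ∑ i ∈ s, x i) := by
    simp only [star_sub, sub_mul, mul_sub, sum_sub_distrib, star_sum, sum_mul, mul_sum, sum_const,
      smul_sub, two_smul, ← Nat.cast_smul_eq_nsmul ℝ, ← smul_sum]
    rw [sum_comm (f := fun i j => star (x i) * x j)]
    abel
  rw [← sub_nonneg]
  have h2 : (0 : A) ≤ (2 : ℝ) • _ := key ▸ sum_nonneg fun i _ => sum_nonneg fun j _ =>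
    star_mul_self_nonneg (x i - x j)
  simpa using (smul_nonneg (by norm_num : (0 : ℝ) ≤ 1 / 2) h2)

namespace IsCondExp

variable {E : A → A} (hE : IsCondExp E)
include hE

noncomputable def toPositiveLinearMap : A →ₚ[ℂ] A :=
  .mk₀ { toFun := E, map_add' := hE.map_add, map_smul' := hE.map_smul } hE.pos

lemma map_sum {ι : Type*} (s : Finset ι) (f : ι → A) : E (∑ i ∈ s, f i) = ∑ i ∈ s, E (f i) :=
  _root_.map_sum hE.toPositiveLinearMap f s

lemma map_zero : E 0 = 0 :=
  _root_.map_zero hE.toPositiveLinearMap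

lemma map_sub (a b : A) : E (a - b) = E a - E b :=
  _root_.map_sub hE.toPositiveLinearMap a b

lemma map_real_smul_s12 (r : ℝ) (a : A) : E (r • a) = r • E a :=
  PositiveLinearMap.map_smul_of_tower hE.toPositiveLinearMap r a

lemma mono {a b : A} (hab : a ≤ b) : E a ≤ E b :=
  OrderHomClass.mono hE.toPositiveLinearMap hab

open scoped ComplexStarModule in
lemma map_star (a : A) : E (star a) = star (E a) := by
  have hsa (b : A) (hb : IsSelfAdjoint b) : star (E b) = E b :=
    (hb.map' hE.toPositiveLinearMap).star_eq
  rw [← realPart_add_I_smul_imaginaryPart a]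
  simp only [star_add, star_smul, hE.map_add, hE.map_smul, hsa _ (ℜ a).2, hsa _ (ℑ a).2,
    (ℜ a).2.star_eq, (ℑ a).2.star_eq, Complex.star_def, Complex.conj_I]

omit [StarOrderedRing A] in
lemma map_mul_left (a z : A) : E (E a * z) = E a * E z := by
  simpa [hE.map_one] using hE.bimod z a 1

omit [StarOrderedRing A] in
lemma map_mul_right (z a : A) : E (z * E a) = E z * E a := by
  simpa [hE.map_one] using hE.bimod z 1 a

lemma star_map_mul_map_le (d : A) : star (E d) * E d ≤ E (star d * d) := by
  have key : E (star (d - E d) * (d - E d)) = E (star d * d) - star (E d) * E d := by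
    simp only [star_sub, sub_mul, mul_sub, hE.map_sub, ← hE.map_star, hE.map_mul_left,
      hE.map_mul_right, hE.idem]
    abel
  exact sub_nonneg.mp (key ▸ hE.pos _ (star_mul_self_nonneg _))

section frameOp

variable {ι : Type*} [Fintype ι] (e : ι → A)

noncomputable def frameOp : A →ₗ[ℂ] A where
  toFun x := ∑ i, e i * E (star (e i) * x)
  map_add' x y := by simp only [mul_add, hE.map_add, Finset.sum_add_distrib]
  map_smul' c x := by simp only [mul_smul_comm, hE.map_smul, Finset.smul_sum, RingHom.id_apply]

omit [StarOrderedRing A] in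
lemma frameOp_apply (x : A) : hE.frameOp e x = ∑ i, e i * E (star (e i) * x) := rfl

lemma map_star_mul_frameOp (u v : A) :
    E (star u * hE.frameOp e v) = ∑ i, E (star u * e i) * E (star (e i) * v) := by
  simp only [frameOp_apply, Finset.mul_sum, ← mul_assoc, hE.map_sum, hE.map_mul_right]

lemma map_star_frameOp_mul (u v : A) :
    E (star (hE.frameOp e u) * v) = E (star u * hE.frameOp e v) := by
  rw [← star_star v, ← star_mul, hE.map_star, star_star, hE.map_star_mul_frameOp,
    hE.map_star_mul_frameOp, star_sum]
  simp only [star_mul, ← hE.map_star, star_star]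

lemma frameOp_injective (hfaith : ∀ a : A, E (star a * a) = 0 → a = 0)
    (b : Module.Basis ι ℂ A) : Function.Injective (hE.frameOp b) := by
  refine (injective_iff_map_eq_zero _).mpr fun x hx => hfaith x ?_
  have hsum : ∑ i, star (E (star (b i) * x)) * E (star (b i) * x) = 0 := by
    simpa [← hE.map_star, hx, hE.map_zero] using
      (hE.map_star_mul_frameOp b x x).symm
  have hcoef (i : ι) : E (star (b i) * x) = 0 := by
    rw [← CStarRing.star_mul_self_eq_zero_iff]
    exact (Finset.sum_eq_zero_iff_of_nonneg fun j _ => star_mul_self_nonneg _).mp hsum i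
      (Finset.mem_univ i)
  nth_rewrite 1 [← b.sum_repr x]
  simp only [star_sum, star_smul, Finset.sum_mul, smul_mul_assoc, hE.map_sum, hE.map_smul, hcoef,
    smul_zero, Finset.sum_const_zero]

end frameOp

lemma exists_quasiBasis [FiniteDimensional ℂ A] (hfaith : ∀ a : A, E (star a * a) = 0 → a = 0) :
    ∃ (n : ℕ) (u v : Fin n → A), ∀ x, ∑ i, u i * E (star (v i) * x) = x := by
  let b := Module.finBasis ℂ A
  have hsurj := LinearMap.injective_iff_surjective.mp (hE.frameOp_injective hfaith b)
  choose v hv using fun i => hsurj (b i)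
  refine ⟨_, b, v, fun x => ?_⟩
  obtain ⟨y, rfl⟩ := hsurj x
  conv_rhs => rw [frameOp_apply]
  refine Finset.sum_congr rfl fun i _ => ?_
  rw [← hE.map_star_frameOp_mul, hv i]

lemma star_map_mul_le_norm_sq_smul (w c : A) :
    star (E (w * c)) * E (w * c) ≤ ‖w‖ ^ 2 • E (star c * c) := by
  calc star (E (w * c)) * E (w * c)
      ≤ E (star c * (star w * w) * c) := by
        simpa [mul_assoc] using hE.star_map_mul_map_le (w * c)
    _ ≤ E (‖star w * w‖ • (star c * c)) :=
        hE.mono (CStarAlgebra.star_left_conjugate_le_norm_smul (.star_mul_self w))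
    _ = ‖w‖ ^ 2 • E (star c * c) := by
        rw [hE.map_real_smul_s12, CStarRing.norm_star_mul_self, sq]

lemma star_mul_self_le_smul_map_of_quasiBasis {ι : Type*} [Fintype ι] {u v : ι → A}
    (huv : ∀ x, ∑ i, u i * E (star (v i) * x) = x) (c : A) :
    star c * c ≤ ((Fintype.card ι : ℝ) * ∑ i, ‖u i‖ ^ 2 * ‖v i‖ ^ 2) • E (star c * c) := by
  set g : ι → A := fun i => E (star (v i) * c)
  have hterm (i : ι) : star (u i * g i) * (u i * g i) ≤ (‖u i‖ ^ 2 * ‖v i‖ ^ 2) • E (star c * c) :=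
    calc star (u i * g i) * (u i * g i) = star (g i) * (star (u i) * u i) * g i := by
          simp only [star_mul, mul_assoc]
      _ ≤ ‖star (u i) * u i‖ • (star (g i) * g i) :=
          CStarAlgebra.star_left_conjugate_le_norm_smul (.star_mul_self (u i))
      _ ≤ ‖u i‖ ^ 2 • (‖v i‖ ^ 2 • E (star c * c)) := by
          rw [CStarRing.norm_star_mul_self, ← sq]
          gcongr
          simpa using hE.star_map_mul_le_norm_sq_smul (star (v i)) c
      _ = (‖u i‖ ^ 2 * ‖v i‖ ^ 2) • E (star c * c) := smul_smul _ _ _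
  calc star c * c = star (∑ i, u i * g i) * ∑ i, u i * g i := by rw [huv c]
    _ ≤ (Fintype.card ι : ℝ) • ∑ i, star (u i * g i) * (u i * g i) := star_sum_mul_sum_le _ _
    _ ≤ (Fintype.card ι : ℝ) • ∑ i, (‖u i‖ ^ 2 * ‖v i‖ ^ 2) • E (star c * c) := by
        gcongr with i
        exact hterm i
    _ = _ := by rw [← Finset.sum_smul, smul_smul]

end IsCondExp

theorem condexp_findim_implies_finite_index
    {M : Type*} [CStarAlgebra M] [PartialOrder M] [StarOrderedRing M]
    [FiniteDimensional ℂ M]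
    (E : M → M) (hE : IsCondExp E)
    (hfaith : ∀ a : M, E (star a * a) = 0 → a = 0) :
    ∃ K : ℝ, 1 ≤ K ∧ ∀ a : M, 0 ≤ a → 0 ≤ K • E a - a := by
  obtain ⟨n, u, v, huv⟩ := hE.exists_quasiBasis hfaith
  set K : ℝ := n * ∑ i, ‖u i‖ ^ 2 * ‖v i‖ ^ 2
  refine ⟨max 1 K, le_max_left _ _, fun a ha => sub_nonneg.mpr ?_⟩
  obtain ⟨c, rfl⟩ := CStarAlgebra.nonneg_iff_eq_star_mul_self.mp ha
  calc star c * c ≤ K • E (star c * c) := by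
        simpa [K] using hE.star_mul_self_le_smul_map_of_quasiBasis huv c
    _ ≤ max 1 K • E (star c * c) := smul_le_smul_of_nonneg_right (le_max_right _ _) (hE.pos _ ha)
end

section
/- Let 0 < λ < 1 and let E_λ be the conditional expectation on the C*-algebra M₂(ℂ) of complex 2×2 matrices defined by E_λ(a) = (λ·a₁₁ + (1 − λ)·a₂₂)·1₂, where a_{ij} are the entries of a and 1₂ is the identity matrix. Then for a real number K ≥ 1, the map K·E_λ − id is positive (i.e. K·E_λ(a) − a is positive semidefinite for every positive semidefinite a) if and only if K ≥ max{λ⁻¹, (1 − λ)⁻¹}. -/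
open scoped ComplexOrder
open Matrix

/-! For a 2×2 matrix `a` one has `a + adj a = (tr a) • 1` and `adj a = J aᵀ Jᴴ` with
`J = !![0, 1; -1, 0]`, so `adj a` is positive semidefinite when `a` is. Hence
`K E_λ(a) − a = ((Kλ − 1) a₁₁ + (K(1 − λ) − 1) a₂₂) • 1 + adj a` is positive semidefinite as soon
as `Kλ ≥ 1` and `K(1 − λ) ≥ 1`; conversely, testing on `diag(1, 0)` and `diag(0, 1)` forces both
inequalities. -/

/-- The conditional expectation `E_λ` on the C*-algebra of 2×2 complex matrices,
`E_λ(a) = (λ·a₁₁ + (1 − λ)·a₂₂)·1₂`. -/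
noncomputable def Elam (l : ℝ) (a : Matrix (Fin 2) (Fin 2) ℂ) : Matrix (Fin 2) (Fin 2) ℂ :=
  ((l : ℂ) * a 0 0 + (1 - (l : ℂ)) * a 1 1) • (1 : Matrix (Fin 2) (Fin 2) ℂ)

namespace Matrix

variable {R : Type*} [CommRing R]

theorem add_adjugate_fin_two (A : Matrix (Fin 2) (Fin 2) R) : A + adjugate A = A.trace • 1 := by
  ext i j
  fin_cases i <;> fin_cases j <;> simp [adjugate_fin_two, trace_fin_two, add_comm]

theorem adjugate_fin_two_eq_mul_transpose_mul_conjTranspose [StarRing R]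
    (A : Matrix (Fin 2) (Fin 2) R) :
    adjugate A = !![0, 1; -1, 0] * Aᵀ * (!![0, 1; -1, 0] : Matrix (Fin 2) (Fin 2) R)ᴴ := by
  ext i j
  fin_cases i <;> fin_cases j <;>
    simp [adjugate_fin_two, mul_apply, vecMul, dotProduct, Fin.sum_univ_two]

theorem PosSemidef.adjugate_fin_two [PartialOrder R] [StarRing R]
    {A : Matrix (Fin 2) (Fin 2) R} (hA : A.PosSemidef) : (adjugate A).PosSemidef := by
  rw [adjugate_fin_two_eq_mul_transpose_mul_conjTranspose]
  exact hA.transpose.mul_mul_conjTranspose_same _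

end Matrix

theorem smul_Elam_sub_eq (l K : ℝ) (a : Matrix (Fin 2) (Fin 2) ℂ) :
    K • Elam l a - a =
      (((K * l - 1 : ℝ) : ℂ) * a 0 0 + ((K * (1 - l) - 1 : ℝ) : ℂ) * a 1 1) • 1 + adjugate a := by
  rw [← sub_eq_iff_eq_add, sub_sub, add_adjugate_fin_two, trace_fin_two, Elam, ← Complex.coe_smul,
    smul_smul, ← sub_smul]
  congr 1
  push_cast
  ring

theorem posSemidef_smul_Elam_sub_iff (l K : ℝ) :
    (∀ a : Matrix (Fin 2) (Fin 2) ℂ, a.PosSemidef → (K • Elam l a - a).PosSemidef) ↔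
      1 ≤ K * l ∧ 1 ≤ K * (1 - l) := by
  constructor
  · intro H
    have entry_nonneg (x y : ℂ) (hx : 0 ≤ x) (hy : 0 ≤ y) (i : Fin 2) :=
      (H (diagonal ![x, y]) (.diagonal (by simp [Pi.le_def, Fin.forall_fin_two, hx, hy])))
        |>.diag_nonneg (i := i)
    have h₀ := entry_nonneg 1 0 zero_le_one le_rfl 0
    have h₁ := entry_nonneg 0 1 le_rfl zero_le_one 1
    simp [Elam] at h₀ h₁
    exact ⟨by exact_mod_cast h₀, by exact_mod_cast h₁⟩
  · rintro ⟨hl, hl'⟩ a ha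
    rw [smul_Elam_sub_eq]
    refine .add (.smul .one (add_nonneg ?_ ?_)) ha.adjugate_fin_two
    · exact mul_nonneg (by exact_mod_cast sub_nonneg.2 hl) ha.diag_nonneg
    · exact mul_nonneg (by exact_mod_cast sub_nonneg.2 hl') ha.diag_nonneg

theorem Elam_positive_iff_general (l : ℝ) (h0 : 0 < l) (h1 : l < 1) (K : ℝ) :
    (∀ a : Matrix (Fin 2) (Fin 2) ℂ, a.PosSemidef → (K • Elam l a - a).PosSemidef) ↔
      max l⁻¹ (1 - l)⁻¹ ≤ K := by
  rw [posSemidef_smul_Elam_sub_iff, max_le_iff, inv_le_iff_one_le_mul₀ h0,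
    inv_le_iff_one_le_mul₀ (sub_pos.2 h1)]

theorem Elam_positive_iff (l : ℝ) (h0 : 0 < l) (h1 : l < 1) (K : ℝ) (hK : 1 ≤ K) :
    (∀ a : Matrix (Fin 2) (Fin 2) ℂ, a.PosSemidef → (K • Elam l a - a).PosSemidef) ↔
      max l⁻¹ (1 - l)⁻¹ ≤ K :=
  Elam_positive_iff_general l h0 h1 K
end

section
/- Let 0 < λ < 1 and let E_λ be the conditional expectation on the C*-algebra M₂(ℂ) of complex 2×2 matrices defined by E_λ(a) = (λ·a₁₁ + (1 − λ)·a₂₂)·1₂. Then for a real number L ≥ 1, the map L·E_λ − id is completely positive (i.e. for every n ≥ 1 its entrywise application to n×n matrices over M₂(ℂ) maps positive elements to positive elements) if and only if L ≥ λ⁻¹ + (1 − λ)⁻¹. -/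
open scoped ComplexOrder

/-- A map `Φ` on a (C*-)algebra `R` is completely positive if for every `n ≥ 1` its entrywise
application to `n × n` matrices over `R` maps positive elements (i.e. elements of the form
`star B * B`, which are exactly the positive elements of the C*-algebra of matrices over a
C*-algebra) to positive elements. -/
def IsCompletelyPositive {R : Type*} [Ring R] [StarRing R] (Φ : R → R) : Prop :=
  ∀ (n : ℕ) (M : Matrix (Fin n) (Fin n) R),
    (∃ B : Matrix (Fin n) (Fin n) R, M = star B * B) →
    ∃ C : Matrix (Fin n) (Fin n) R, M.map Φ = star C * C

/-!
Write `a = Lλ − 1` and `b = L(1 − λ) − 1`. The Choi matrix of `Φ = L·E_λ − id` is, up to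
reordering the basis, `!![a, -1; -1, b]` on `span {e₀₀, e₁₁}` plus `diag (Lλ, L(1 − λ))`, and
`ab − 1 = L (Lλ(1 − λ) − 1)`, while `λ⁻¹ + (1 − λ)⁻¹ = (λ(1 − λ))⁻¹`.

If `Φ` is completely positive its Choi matrix is positive semidefinite, so `a ≥ 0` (forcing
`L > 0`) and `ab ≥ 1`, whence `Lλ(1 − λ) ≥ 1`. Conversely, if `Lλ(1 − λ) ≥ 1` then `a, b > 0` and
`ab ≥ 1`, so the Choi matrix splits into four rank-one positive pieces; these give Kraus operators
`V₁, …, V₄` with `Φ x = ∑ Vₖ⋆ x Vₖ`, and every map of that form is completely positive.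
-/

open Matrix

namespace Matrix

lemma diagonal_const_mul_mul_diagonal_const {α n : Type*} [Fintype n] [DecidableEq n]
    [Semiring α] (W V : α) (A : Matrix n n α) :
    diagonal (fun _ => W) * A * diagonal (fun _ => V) = A.map (fun x => W * x * V) := by
  ext i j
  simp [diagonal_mul, mul_diagonal]

lemma exists_eq_star_mul_self_of_posSemidef_comp {n m : Type*} [Fintype n] [DecidableEq n]
    [Fintype m] [DecidableEq m] {M : Matrix n n (Matrix m m ℂ)}
    (hM : (comp n n m m ℂ M).PosSemidef) : ∃ C, M = star C * C := by
  open scoped MatrixOrder in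
  obtain ⟨A, hA⟩ := CStarAlgebra.nonneg_iff_eq_star_mul_self.mp hM.nonneg
  refine ⟨(compRingEquiv n m ℂ).symm A, (compRingEquiv n m ℂ).injective ?_⟩
  rw [map_mul]
  -- `comp` commutes with `star` definitionally (`conjTranspose_comp'`)
  exact hA

lemma of_single_one_eq_star_mul_self (k : ℕ) [NeZero k] :
    (of fun i j : Fin k => single i j (1 : ℂ)) =
      star (of fun i j : Fin k => if i = 0 then single 0 j (1 : ℂ) else 0) *
        of fun i j : Fin k => if i = 0 then single 0 j (1 : ℂ) else 0 := by
  ext1 i j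
  simp [mul_apply, star_eq_conjTranspose, conjTranspose_single]

end Matrix

noncomputable def choiMatrix {k : ℕ} (Φ : Matrix (Fin k) (Fin k) ℂ → Matrix (Fin k) (Fin k) ℂ) :
    Matrix (Fin k × Fin k) (Fin k × Fin k) ℂ :=
  comp (Fin k) (Fin k) (Fin k) (Fin k) ℂ (of fun i j => Φ (single i j 1))

namespace IsCompletelyPositive

theorem of_kraus {m ι : Type*} [Fintype m] [DecidableEq m] [Fintype ι]
    (V : ι → Matrix m m ℂ) : IsCompletelyPositive (fun x => ∑ k, star (V k) * x * V k) := by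
  rintro n _ ⟨B, rfl⟩
  set D : ι → Matrix (Fin n) (Fin n) (Matrix m m ℂ) := fun k => B * diagonal (fun _ => V k)
  have hD : ∀ k, star (D k) * D k = (star B * B).map (fun x => star (V k) * x * V k) := by
    intro k
    rw [star_mul, ← diagonal_const_mul_mul_diagonal_const, star_eq_conjTranspose (diagonal _),
      diagonal_conjTranspose]
    simp only [D, Matrix.mul_assoc]
    rfl
  have hsum : (star B * B).map (fun x => ∑ k, star (V k) * x * V k) = ∑ k, star (D k) * D k := by
    ext1 i j
    simp [hD, Matrix.sum_apply]
  rw [hsum]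
  apply exists_eq_star_mul_self_of_posSemidef_comp
  rw [← compRingEquiv_apply, map_sum]
  exact posSemidef_sum _ fun k _ => by
    rw [map_mul]
    exact posSemidef_conjTranspose_mul_self _

theorem posSemidef_choiMatrix {k : ℕ} [NeZero k]
    {Φ : Matrix (Fin k) (Fin k) ℂ → Matrix (Fin k) (Fin k) ℂ} (hΦ : IsCompletelyPositive Φ) :
    (choiMatrix Φ).PosSemidef := by
  obtain ⟨C, hC⟩ := hΦ k _ ⟨_, of_single_one_eq_star_mul_self k⟩
  have hChoi : choiMatrix Φ = compRingEquiv (Fin k) (Fin k) ℂ (star C * C) := by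
    rw [← hC]
    rfl
  rw [hChoi, map_mul]
  exact posSemidef_conjTranspose_mul_self _

end IsCompletelyPositive

lemma choiMatrix_Elam_submatrix (l L : ℝ) :
    (choiMatrix fun a => L • Elam l a - a).submatrix ![(0, 0), (1, 1)] ![(0, 0), (1, 1)] =
      !![((L * l - 1 : ℝ) : ℂ), -1; -1, ((L * (1 - l) - 1 : ℝ) : ℂ)] := by
  ext i j
  fin_cases i <;> fin_cases j <;> simp [choiMatrix, Elam, single_apply, one_apply]

noncomputable def elamKraus (μ ν γ δ ε : ℝ) : Fin 4 → Matrix (Fin 2) (Fin 2) ℂ :=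
  ![!![(μ : ℂ), 0; 0, ν], !![(γ : ℂ), 0; 0, 0], !![0, (δ : ℂ); 0, 0], !![0, 0; (ε : ℂ), 0]]

lemma Elam_eq_sum_kraus (l L μ ν γ δ ε : ℝ) (hμν : μ * ν = -1)
    (hμγ : μ ^ 2 + γ ^ 2 = L * l - 1) (hν : ν ^ 2 = L * (1 - l) - 1) (hδ : δ ^ 2 = L * l)
    (hε : ε ^ 2 = L * (1 - l)) (x : Matrix (Fin 2) (Fin 2) ℂ) :
    L • Elam l x - x =
      ∑ k, star (elamKraus μ ν γ δ ε k) * x * elamKraus μ ν γ δ ε k := by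
  have hμν' : (μ : ℂ) * ν = -1 := by exact_mod_cast hμν
  have hμγ' : (μ : ℂ) ^ 2 + γ ^ 2 = L * l - 1 := by exact_mod_cast hμγ
  have hν' : (ν : ℂ) ^ 2 = L * (1 - l) - 1 := by exact_mod_cast hν
  have hδ' : (δ : ℂ) ^ 2 = L * l := by exact_mod_cast hδ
  have hε' : (ε : ℂ) ^ 2 = L * (1 - l) := by exact_mod_cast hε
  ext i j
  fin_cases i <;> fin_cases j <;>
    simp [Elam, elamKraus, Fin.sum_univ_four, star_eq_conjTranspose, mul_apply, Fin.sum_univ_two]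
  · linear_combination (-x 0 0) * hμγ' - x 1 1 * hε'
  · linear_combination (-x 0 1) * hμν'
  · linear_combination (-x 1 0) * hμν'
  · linear_combination (-x 1 1) * hν' - x 0 0 * hδ'

lemma inv_add_inv_one_sub_le_iff {l L : ℝ} (h0 : 0 < l) (h1 : l < 1) :
    l⁻¹ + (1 - l)⁻¹ ≤ L ↔ 1 ≤ L * (l * (1 - l)) := by
  have h1' : 0 < 1 - l := sub_pos.mpr h1
  rw [show l⁻¹ + (1 - l)⁻¹ = (l * (1 - l))⁻¹ by field_simp; ring,
    inv_le_iff_one_le_mul₀ (by positivity)]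

lemma exists_kraus_Elam {l L : ℝ} (h0 : 0 < l) (h1 : l < 1) (hL : 1 ≤ L * (l * (1 - l))) :
    ∃ V : Fin 4 → Matrix (Fin 2) (Fin 2) ℂ, ∀ x, L • Elam l x - x = ∑ k, star (V k) * x * V k := by
  have ha : 0 < L * l - 1 := by nlinarith
  have hb : 0 < L * (1 - l) - 1 := by nlinarith
  set ν := √(L * (1 - l) - 1)
  have hν : ν ^ 2 = L * (1 - l) - 1 := Real.sq_sqrt hb.le
  have hν0 : ν ≠ 0 := (Real.sqrt_pos.mpr hb).ne'
  have hγ : 0 ≤ L * l - 1 - ν⁻¹ ^ 2 := by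
    rw [inv_pow, hν, sub_nonneg, inv_le_iff_one_le_mul₀ hb]
    nlinarith
  exact ⟨_, Elam_eq_sum_kraus l L (-ν⁻¹) ν √(L * l - 1 - ν⁻¹ ^ 2) √(L * l) √(L * (1 - l))
    (by field_simp) (by rw [Real.sq_sqrt hγ]; ring) hν (Real.sq_sqrt (by nlinarith))
    (Real.sq_sqrt (by nlinarith))⟩

theorem Elam_completely_positive_iff_general (l : ℝ) (h0 : 0 < l) (h1 : l < 1) (L : ℝ) :
    IsCompletelyPositive (fun a : Matrix (Fin 2) (Fin 2) ℂ => L • Elam l a - a) ↔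
      l⁻¹ + (1 - l)⁻¹ ≤ L := by
  rw [inv_add_inv_one_sub_le_iff h0 h1]
  constructor
  · intro hΦ
    have hS := hΦ.posSemidef_choiMatrix.submatrix ![(0, 0), (1, 1)]
    rw [choiMatrix_Elam_submatrix] at hS
    have ha : 0 ≤ L * l - 1 := by
      have h := hS.diag_nonneg (i := 0)
      simp only [of_apply, cons_val', cons_val_zero, empty_val', cons_val_fin_one] at h
      exact_mod_cast h
    have hdet : 0 ≤ (L * l - 1) * (L * (1 - l) - 1) - 1 := by
      have h := hS.det_nonneg
      rw [det_fin_two_of, neg_one_mul, neg_neg] at h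
      exact_mod_cast h
    nlinarith
  · intro hL
    obtain ⟨V, hV⟩ := exists_kraus_Elam h0 h1 hL
    simpa only [hV] using IsCompletelyPositive.of_kraus V

theorem Elam_completely_positive_iff (l : ℝ) (h0 : 0 < l) (h1 : l < 1) (L : ℝ) (hL : 1 ≤ L) :
    IsCompletelyPositive (fun a : Matrix (Fin 2) (Fin 2) ℂ => L • Elam l a - a) ↔
      l⁻¹ + (1 - l)⁻¹ ≤ L :=
  Elam_completely_positive_iff_general l h0 h1 L
end

section
/- Let A = C([−1,1], ℂ) and let E : A → A be defined by (E f)(x) = (f(x) + f(−x))/2. Then E admits no finite quasi-basis: there do not exist n ∈ ℕ and elements u₁, …, u_n ∈ A such that f = Σ_{i=1}^{n} u_i · E(u_i* · f) for every f ∈ A. In particular, E is not of algebraically finite (Watatani) index. -/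
open scoped ComplexOrder

noncomputable section

/-- `-x ∈ [-1,1]` for `x ∈ [-1,1]`. -/
lemma neg_mem_Icc (x : Set.Icc (-1 : ℝ) 1) : -(x : ℝ) ∈ Set.Icc (-1 : ℝ) 1 :=
  ⟨by linarith [x.2.2], by linarith [x.2.1]⟩

/-- The reflection `x ↦ -x` on the interval `[-1, 1]`. -/
def negIcc : C(Set.Icc (-1 : ℝ) 1, Set.Icc (-1 : ℝ) 1) :=
  ⟨fun x => ⟨-(x : ℝ), neg_mem_Icc x⟩,
    (continuous_neg.comp continuous_subtype_val).subtype_mk fun x => neg_mem_Icc x⟩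

/-- The conditional expectation `(E f)(x) = (f(x) + f(-x))/2` on `C([-1,1], ℂ)`. -/
def Esym : C(Set.Icc (-1 : ℝ) 1, ℂ) → C(Set.Icc (-1 : ℝ) 1, ℂ) :=
  fun f => (2⁻¹ : ℂ) • (f + f.comp negIcc)

/-!
For a continuous map `σ` of `X` put `E f = (f + f ∘ σ) / 2` and `K(x, y) = ∑ uᵢ(x) conj uᵢ(y)`.
Evaluating the quasi-basis identity at `x` gives `2 f(x) = K(x, x) f(x) + K(x, σ x) f(σ x)`.
At a fixed point of `σ`, taking `f = 1` forces `K(x, x) = 1`; at a moved point, a function with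
`f(x) = 1`, `f(σ x) = 0` forces `K(x, x) = 2`. Since `x ↦ K(x, x)` is continuous, the fixed-point
set of `σ` is clopen, which fails for `x ↦ -x` on the connected interval `[-1, 1]`.
-/

open Function

def IsQuasiBasis {A ι : Type*} [NonUnitalNonAssocSemiring A] [Star A] [Fintype ι]
    (E : A → A) (u : ι → A) : Prop :=
  ∀ a, a = ∑ i, u i * E (star (u i) * a)

variable {X ι : Type*} [TopologicalSpace X] [Fintype ι]

def symmetrize (σ : C(X, X)) (f : C(X, ℂ)) : C(X, ℂ) :=
  (2⁻¹ : ℂ) • (f + f.comp σ)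

def quasiBasisKernel (u : ι → C(X, ℂ)) (x y : X) : ℂ :=
  ∑ i, u i x * star (u i y)

lemma continuous_quasiBasisKernel_diag (u : ι → C(X, ℂ)) :
    Continuous fun x => quasiBasisKernel u x x := by
  unfold quasiBasisKernel
  fun_prop

namespace IsQuasiBasis

variable {σ : C(X, X)} {u : ι → C(X, ℂ)}

lemma two_mul_apply (hu : IsQuasiBasis (symmetrize σ) u) (f : C(X, ℂ)) (x : X) :
    2 * f x = quasiBasisKernel u x x * f x + quasiBasisKernel u x (σ x) * f (σ x) := by
  have h := congr($(hu f) x)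
  simp only [symmetrize, ContinuousMap.sum_apply, ContinuousMap.mul_apply, ContinuousMap.smul_apply,
    ContinuousMap.add_apply, ContinuousMap.comp_apply, ContinuousMap.star_apply, smul_eq_mul] at h
  rw [quasiBasisKernel, quasiBasisKernel, Finset.sum_mul, Finset.sum_mul, ← Finset.sum_add_distrib]
  nth_rw 1 [h]
  rw [Finset.mul_sum]
  exact Finset.sum_congr rfl fun i _ => by ring

lemma kernel_add (hu : IsQuasiBasis (symmetrize σ) u) (x : X) :
    quasiBasisKernel u x x + quasiBasisKernel u x (σ x) = 2 := by
  simpa using (hu.two_mul_apply 1 x).symm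

lemma kernel_diag_of_isFixedPt (hu : IsQuasiBasis (symmetrize σ) u) {x : X}
    (hx : IsFixedPt σ x) : quasiBasisKernel u x x = 1 := by
  have h := hu.kernel_add x
  rw [hx.eq] at h
  linear_combination h / 2

lemma kernel_diag_of_not_isFixedPt [T35Space X] (hu : IsQuasiBasis (symmetrize σ) u)
    {x : X} (hx : ¬ IsFixedPt σ x) : quasiBasisKernel u x x = 2 := by
  obtain ⟨g, hg, hgx, hgσx⟩ := CompletelyRegularSpace.completely_regular (σ x) {x}
    isClosed_singleton hx
  have h := hu.two_mul_apply ⟨fun y => ((g y : ℝ) : ℂ), by fun_prop⟩ x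
  simpa [hgx, hgσx rfl] using h.symm

lemma isClopen_fixedPoints [T35Space X] (hu : IsQuasiBasis (symmetrize σ) u) :
    IsClopen (fixedPoints σ) := by
  have h : fixedPoints σ = {x | quasiBasisKernel u x x ≠ 2} := by
    ext x
    exact ⟨fun hx => (hu.kernel_diag_of_isFixedPt hx).trans_ne (by norm_num),
      fun hx => by_contra fun h => hx (hu.kernel_diag_of_not_isFixedPt h)⟩
  exact ⟨isClosed_fixedPoints σ.continuous,
    h ▸ isOpen_ne_fun (continuous_quasiBasisKernel_diag u) continuous_const⟩

end IsQuasiBasis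

theorem not_isQuasiBasis_symmetrize [T35Space X] [PreconnectedSpace X] {σ : C(X, X)} {x y : X}
    (hx : IsFixedPt σ x) (hy : ¬ IsFixedPt σ y) (u : ι → C(X, ℂ)) :
    ¬ IsQuasiBasis (symmetrize σ) u := fun hu =>
  hy <| show y ∈ fixedPoints σ from
    (hu.isClopen_fixedPoints.eq_univ ⟨x, hx⟩).symm ▸ Set.mem_univ y

theorem Esym_no_finite_quasi_basis :
    ¬ ∃ (n : ℕ) (u : Fin n → C(Set.Icc (-1 : ℝ) 1, ℂ)),
        ∀ f : C(Set.Icc (-1 : ℝ) 1, ℂ),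
          f = ∑ i, u i * Esym (star (u i) * f) := by
  rintro ⟨n, u, hu⟩
  have := Subtype.preconnectedSpace (isPreconnected_Icc (a := (-1 : ℝ)) (b := 1))
  have hzero : IsFixedPt negIcc ⟨0, by norm_num⟩ := Subtype.ext neg_zero
  have hone : ¬ IsFixedPt negIcc ⟨1, by norm_num⟩ := fun h => by
    norm_num [IsFixedPt, negIcc] at h
  exact not_isQuasiBasis_symmetrize hzero hone u hu
end
end
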